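/- arXiv:2510.04309 — 2 statements merged into one kernel-verified Lean document; each statement's English description precedes it below -/
import Mathlib

section
/- Fix 0 ≤ q < 1 and M > 0. Define r(h) for h ∈ [0, (1−q)/M) by r(h) = (q + 1 + √((1−q)² − 4Mh))/2 if 4Mh ≤ (1−q)², and r(h) = √(q + Mh) otherwise. Then r is decreasing in h on [0, (1−q)²/(4M)], increasing on [(1−q)²/(4M), (1−q)/M), and attains its minimum value (q+1)/2 at h = (1−q)²/(4M). -/
/-!
Below the critical gain `h* = (1-q)²/(4M)` the radius is `(q + 1 + √((1-q)² - 4Mh))/2`, which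
decreases with `h`; above it the radius is `√(q + Mh)`, which increases. At `h*` the discriminant
vanishes and `q + Mh* = ((q+1)/2)²`, so both branches meet at `(q+1)/2`, and monotonicity on each
side makes this the minimum.
-/

open Set

noncomputable section

namespace PIController

variable {q M h : ℝ}

def spectralRadius (q M h : ℝ) : ℝ :=
  if 4 * M * h ≤ (1 - q) ^ 2 then (q + 1 + √((1 - q) ^ 2 - 4 * M * h)) / 2
  else √(q + M * h)

def criticalGain (q M : ℝ) : ℝ := (1 - q) ^ 2 / (4 * M)

lemma four_mul_le_sq_iff_le_criticalGain (hM : 0 < M) :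
    4 * M * h ≤ (1 - q) ^ 2 ↔ h ≤ criticalGain q M := by
  rw [criticalGain, le_div_iff₀ (by positivity), mul_comm]

lemma add_mul_criticalGain (hM : 0 < M) : q + M * criticalGain q M = ((q + 1) / 2) ^ 2 := by
  rw [criticalGain]
  field_simp
  ring

lemma criticalGain_nonneg (hM : 0 < M) : 0 ≤ criticalGain q M := by
  unfold criticalGain; positivity

lemma criticalGain_lt (hM : 0 < M) (hq : q < 1) (hq3 : -3 < q) :
    criticalGain q M < (1 - q) / M := by
  rw [criticalGain, div_lt_div_iff₀ (by positivity) hM]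
  nlinarith [mul_pos (sub_pos.2 hq) hM]

lemma spectralRadius_of_le (hM : 0 < M) (hh : h ≤ criticalGain q M) :
    spectralRadius q M h = (q + 1 + √((1 - q) ^ 2 - 4 * M * h)) / 2 :=
  if_pos ((four_mul_le_sq_iff_le_criticalGain hM).2 hh)

lemma spectralRadius_of_lt (hM : 0 < M) (hh : criticalGain q M < h) :
    spectralRadius q M h = √(q + M * h) :=
  if_neg ((four_mul_le_sq_iff_le_criticalGain hM).not.2 hh.not_ge)

lemma spectralRadius_criticalGain (hM : 0 < M) :
    spectralRadius q M (criticalGain q M) = (q + 1) / 2 := by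
  rw [spectralRadius_of_le hM le_rfl, criticalGain, mul_div_cancel₀ _ (by positivity), sub_self,
    Real.sqrt_zero, add_zero]

lemma strictAntiOn_spectralRadius (hM : 0 < M) :
    StrictAntiOn (spectralRadius q M) (Iic (criticalGain q M)) := by
  intro a ha b hb hab
  rw [spectralRadius_of_le hM ha, spectralRadius_of_le hM hb]
  have hb' := (four_mul_le_sq_iff_le_criticalGain hM).2 hb
  have : √((1 - q) ^ 2 - 4 * M * b) < √((1 - q) ^ 2 - 4 * M * a) :=
    Real.sqrt_lt_sqrt (by linarith) (by nlinarith)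
  linarith

/-- At `h*` itself this is `(q+1)/2 ≤ |(q+1)/2|`, an equality only when `q ≥ -1`. -/
lemma spectralRadius_le_sqrt (hM : 0 < M) (hh : criticalGain q M ≤ h) :
    spectralRadius q M h ≤ √(q + M * h) := by
  rcases hh.eq_or_lt with rfl | hlt
  · rw [spectralRadius_criticalGain hM, add_mul_criticalGain hM, Real.sqrt_sq_eq_abs]
    exact le_abs_self _
  · exact (spectralRadius_of_lt hM hlt).le

lemma strictMonoOn_spectralRadius (hM : 0 < M) :
    StrictMonoOn (spectralRadius q M) (Ici (criticalGain q M)) := by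
  intro a ha b _ hab
  have hqa : 0 ≤ q + M * a := by
    have hcrit := add_mul_criticalGain (q := q) hM
    nlinarith [sq_nonneg ((q + 1) / 2), mul_le_mul_of_nonneg_left (mem_Ici.1 ha) hM.le]
  calc spectralRadius q M a ≤ √(q + M * a) := spectralRadius_le_sqrt hM ha
    _ < √(q + M * b) := Real.sqrt_lt_sqrt hqa (by nlinarith)
    _ = spectralRadius q M b := (spectralRadius_of_lt hM (lt_of_le_of_lt ha hab)).symm

lemma spectralRadius_criticalGain_le (hM : 0 < M) (h : ℝ) :
    spectralRadius q M (criticalGain q M) ≤ spectralRadius q M h := by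
  rcases le_total h (criticalGain q M) with hh | hh
  · exact (strictAntiOn_spectralRadius hM).antitoneOn hh self_mem_Iic hh
  · exact (strictMonoOn_spectralRadius hM).monotoneOn self_mem_Ici hh hh

end PIController

end

open PIController in
/-- The spectral radius `r(h)` of the PI comparison matrix, as a function of the
integral gain `h`, is strictly decreasing on `[0, (1-q)²/(4M)]`, strictly increasing on
`[(1-q)²/(4M), (1-q)/M)`, and attains its minimum value `(q+1)/2` at `h = (1-q)²/(4M)`. -/
theorem stmt7 (q M : ℝ) (hq0 : 0 ≤ q) (hq1 : q < 1) (hM : 0 < M)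
    (r : ℝ → ℝ)
    (hr : ∀ h ∈ Set.Ico (0 : ℝ) ((1 - q) / M),
      r h = if 4 * M * h ≤ (1 - q) ^ 2
        then (q + 1 + Real.sqrt ((1 - q) ^ 2 - 4 * M * h)) / 2
        else Real.sqrt (q + M * h)) :
    StrictAntiOn r (Set.Icc 0 ((1 - q) ^ 2 / (4 * M))) ∧
    StrictMonoOn r (Set.Ico ((1 - q) ^ 2 / (4 * M)) ((1 - q) / M)) ∧
    r ((1 - q) ^ 2 / (4 * M)) = (q + 1) / 2 ∧
    (∀ h ∈ Set.Ico (0 : ℝ) ((1 - q) / M), (q + 1) / 2 ≤ r h) := by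
  have hcrit : criticalGain q M < (1 - q) / M := criticalGain_lt hM hq1 (by linarith)
  have heq : EqOn (spectralRadius q M) r (Ico 0 ((1 - q) / M)) := fun h hh => (hr h hh).symm
  have hleft : Icc 0 (criticalGain q M) ⊆ Ico 0 ((1 - q) / M) :=
    Icc_subset_Ico_right hcrit
  have hright : Ico (criticalGain q M) ((1 - q) / M) ⊆ Ico 0 ((1 - q) / M) :=
    Ico_subset_Ico_left (criticalGain_nonneg hM)
  have hmem : criticalGain q M ∈ Ico 0 ((1 - q) / M) :=
    hleft (right_mem_Icc.2 (criticalGain_nonneg hM))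
  refine ⟨((strictAntiOn_spectralRadius hM).mono fun _ hh => hh.2).congr (heq.mono hleft),
    ((strictMonoOn_spectralRadius hM).mono fun _ hh => hh.1).congr (heq.mono hright),
    (heq hmem).symm.trans (spectralRadius_criticalGain hM), fun h hh => ?_⟩
  rw [← heq hh, ← spectralRadius_criticalGain hM]
  exact spectralRadius_criticalGain_le hM h
end

section
/- Let 0 ≤ q < 1, M > 0, R ≥ 1, and ℓ ≥ 0 with ℓ ≤ (1−q)/((R−1)M) (interpreting the bound as +∞ when R = 1). Let sequences a(k), b(k), c(k), e(k), s(k) satisfy 0 ≤ a(k) ≤ q, 0 ≤ b(k), 0 ≤ c(k) ≤ Mℓ, s(k) ≥ 0, e(k) > 0, e(k−1) ≤ R·e(k), and the PID recursion e(k+1) = a(k)e(k) − b(k)s(k) − c(k)(e(k) − e(k−1)). Then e(k+1) ≤ e(k). -/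
/-- Pre-overshoot monotonic decrease under PID control (disturbance-free): with
`0 ≤ a ≤ q < 1`, `0 ≤ b`, `0 ≤ c ≤ Mℓ`, `s ≥ 0`, `e, e_prev > 0`, `e_prev ≤ R e`, and the
derivative-gain bound `ℓ (R-1) M ≤ 1 - q` (the form `ℓ ≤ (1-q)/((R-1)M)`, valid also for
`R = 1`), the PID recursion `e' = a e - b s - c (e - e_prev)` satisfies `e' ≤ e`. -/
theorem stmt14 (q M R l a b c s e eprev enext : ℝ)
    (hq0 : 0 ≤ q) (hq1 : q < 1) (hM : 0 < M) (hR : 1 ≤ R) (hl : 0 ≤ l)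
    (hlbound : l * ((R - 1) * M) ≤ 1 - q)
    (ha0 : 0 ≤ a) (haq : a ≤ q) (hb : 0 ≤ b) (hc0 : 0 ≤ c) (hcl : c ≤ M * l)
    (hs : 0 ≤ s) (he : 0 < e) (heprev : 0 < eprev) (hsm : eprev ≤ R * e)
    (hrec : enext = a * e - b * s - c * (e - eprev)) :
    enext ≤ e := by
  have key : c * (eprev - e) ≤ M * l * ((R - 1) * e) := by
    rcases le_or_gt eprev e with h | h
    · have h1 : c * (eprev - e) ≤ 0 := mul_nonpos_of_nonneg_of_nonpos hc0 (by linarith)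
      have h2 : 0 ≤ M * l * ((R - 1) * e) :=
        mul_nonneg (mul_nonneg hM.le hl) (mul_nonneg (by linarith) he.le)
      linarith
    · nlinarith
  nlinarith [mul_nonneg hb hs, mul_le_mul_of_nonneg_right haq he.le]
end
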